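/- arXiv:2206.05598 — 4 statements merged into one kernel-verified Lean document; each statement's English description precedes it below -/
import Mathlib

section
/- Let A = ∏_{j=1}^n [a_j, b_j] be a box in ℝⁿ (with a_j ≤ b_j, possibly infinite endpoints), Λ₀, Λ₁ diagonal n×n matrices with nonnegative entries, x₀, x₁ ∈ ℝᵐ, S an n×m matrix, α ∈ (0,1), and suppose αΛ₁ + (1-α)Λ₀ is invertible. Define A_i := {Λᵢ y − S xᵢ : y ∈ A}, Λ_α := αΛ₁ + (1-α)Λ₀, x_α := αx₁ + (1-α)x₀. Then α·A₁ + (1-α)·A₀ ⊆ {Λ_α y − S x_α : y ∈ A}. -/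
/-!
Write `Λᵢ = diag(dᵢ)`. Coordinatewise, with the nonnegative weights `e₁ = α d₁`, `e₀ = (1-α) d₀`,
the number `e₁ y₁ + e₀ y₀` equals `(e₁ + e₀) y` for the weighted mean `y` of `y₁` and `y₀`, and a
box is closed under such coordinatewise convex combinations.
-/

open Pointwise Matrix Set

lemma Matrix.IsDiag.mulVec_eq_diag_mul {ι R : Type*} [Fintype ι] [DecidableEq ι] [Semiring R]
    {M : Matrix ι ι R} (hM : M.IsDiag) (y : ι → R) : M *ᵥ y = M.diag * y := by
  conv_lhs => rw [← hM.diagonal_diag]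
  ext i
  exact mulVec_diagonal M.diag y i

lemma convex_setOf_coe_mem_Icc (a b : EReal) : Convex ℝ {t : ℝ | a ≤ t ∧ t ≤ b} :=
  (ordConnected_Icc.preimage_mono EReal.coe_strictMono.monotone).convex

/-- Where both weights vanish the equation holds for any `y j`; the junk value `0 / 0 = 0`
makes the weighted mean below pick `y₀ j` there. -/
lemma exists_mem_pi_add_mul_eq {ι : Type*} {I : ι → Set ℝ} (hI : ∀ j, Convex ℝ (I j))
    {e₀ e₁ y₀ y₁ : ι → ℝ} (he₀ : 0 ≤ e₀) (he₁ : 0 ≤ e₁)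
    (hy₀ : y₀ ∈ univ.pi I) (hy₁ : y₁ ∈ univ.pi I) :
    ∃ y ∈ univ.pi I, (e₁ + e₀) * y = e₁ * y₁ + e₀ * y₀ := by
  set p : ι → ℝ := fun j => e₁ j / (e₁ j + e₀ j)
  have hp₀ : ∀ j, 0 ≤ p j := fun j => div_nonneg (he₁ j) (add_nonneg (he₁ j) (he₀ j))
  have hp₁ : ∀ j, p j ≤ 1 := fun j => div_le_one_of_le₀ (le_add_of_nonneg_right (he₀ j))
    (add_nonneg (he₁ j) (he₀ j))
  refine ⟨fun j => p j * y₁ j + (1 - p j) * y₀ j,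
    fun j _ => hI j (hy₁ j trivial) (hy₀ j trivial) (hp₀ j) (sub_nonneg.2 (hp₁ j)) (by ring),
    funext fun j => ?_⟩
  have h₀ : 0 ≤ e₀ j := he₀ j
  have h₁ : 0 ≤ e₁ j := he₁ j
  simp only [Pi.add_apply, Pi.mul_apply, p]
  rcases (add_nonneg h₁ h₀).eq_or_lt with hsum | hsum
  · have he₁0 : e₁ j = 0 := by linarith
    have he₀0 : e₀ j = 0 := by linarith
    simp [he₁0, he₀0]
  · field_simp
    ring

theorem stmt_6_general {n m : ℕ} (a b : Fin n → EReal)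
    (A : Set (Fin n → ℝ))
    (hA : A = {y : Fin n → ℝ | ∀ j, a j ≤ (y j : EReal) ∧ (y j : EReal) ≤ b j})
    (Λ₀ Λ₁ : Matrix (Fin n) (Fin n) ℝ)
    (hΛ₀ : Λ₀.IsDiag) (hΛ₁ : Λ₁.IsDiag)
    (hΛ₀' : ∀ j, 0 ≤ Λ₀ j j) (hΛ₁' : ∀ j, 0 ≤ Λ₁ j j)
    (x₀ x₁ : Fin m → ℝ) (S : Matrix (Fin n) (Fin m) ℝ)
    (α : ℝ) (hα : α ∈ Set.Ioo (0:ℝ) 1) :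
    α • {w : Fin n → ℝ | ∃ y ∈ A, w = Λ₁.mulVec y - S.mulVec x₁} +
      (1 - α) • {w : Fin n → ℝ | ∃ y ∈ A, w = Λ₀.mulVec y - S.mulVec x₀} ⊆
    {w : Fin n → ℝ | ∃ y ∈ A,
        w = (α • Λ₁ + (1 - α) • Λ₀).mulVec y - S.mulVec (α • x₁ + (1 - α) • x₀)} := by
  rintro _ ⟨_, ⟨_, ⟨y₁, hy₁, rfl⟩, rfl⟩, _, ⟨_, ⟨y₀, hy₀, rfl⟩, rfl⟩, rfl⟩
  have hbox : A = univ.pi fun j => {t : ℝ | a j ≤ t ∧ t ≤ b j} := by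
    rw [hA]
    ext
    simp
  rw [hbox] at hy₀ hy₁ ⊢
  obtain ⟨y, hy, hmean⟩ := exists_mem_pi_add_mul_eq (fun j => convex_setOf_coe_mem_Icc (a j) (b j))
    (e₀ := (1 - α) • Λ₀.diag) (e₁ := α • Λ₁.diag)
    (smul_nonneg (sub_nonneg.2 hα.2.le) hΛ₀') (smul_nonneg hα.1.le hΛ₁') hy₀ hy₁
  refine ⟨y, hy, ?_⟩
  rw [((hΛ₁.smul α).add (hΛ₀.smul (1 - α))).mulVec_eq_diag_mul, hΛ₁.mulVec_eq_diag_mul,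
    hΛ₀.mulVec_eq_diag_mul, diag_add, diag_smul, diag_smul, hmean, mulVec_add, mulVec_smul,
    mulVec_smul, smul_mul_assoc, smul_mul_assoc]
  module

/-- Diagonal-scale case of the Minkowski-sum inclusion, for boxes
(with possibly infinite endpoints). -/
theorem stmt_6 {n m : ℕ} (a b : Fin n → EReal) (hab : ∀ j, a j ≤ b j)
    (A : Set (Fin n → ℝ))
    (hA : A = {y : Fin n → ℝ | ∀ j, a j ≤ (y j : EReal) ∧ (y j : EReal) ≤ b j})
    (Λ₀ Λ₁ : Matrix (Fin n) (Fin n) ℝ)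
    (hΛ₀ : Λ₀.IsDiag) (hΛ₁ : Λ₁.IsDiag)
    (hΛ₀' : ∀ j, 0 ≤ Λ₀ j j) (hΛ₁' : ∀ j, 0 ≤ Λ₁ j j)
    (x₀ x₁ : Fin m → ℝ) (S : Matrix (Fin n) (Fin m) ℝ)
    (α : ℝ) (hα : α ∈ Set.Ioo (0:ℝ) 1)
    (hinv : IsUnit (α • Λ₁ + (1 - α) • Λ₀).det) :
    α • {w : Fin n → ℝ | ∃ y ∈ A, w = Λ₁.mulVec y - S.mulVec x₁} +
      (1 - α) • {w : Fin n → ℝ | ∃ y ∈ A, w = Λ₀.mulVec y - S.mulVec x₀} ⊆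
    {w : Fin n → ℝ | ∃ y ∈ A,
        w = (α • Λ₁ + (1 - α) • Λ₀).mulVec y - S.mulVec (α • x₁ + (1 - α) • x₀)} :=
  stmt_6_general a b A hA Λ₀ Λ₁ hΛ₀ hΛ₁ hΛ₀' hΛ₁' x₀ x₁ S α hα
end

section
/- (Positive semidefinite matrices that sum to the identity generate balls, hard inclusion.) Let y₀, y₁ ∈ ℝⁿ and let y be any point in the closed Euclidean ball centered at (y₀+y₁)/2 with radius ‖y₁ − y₀‖₂/2. Then there exists a real symmetric positive-semidefinite matrix C with spectral radius ≤ 1 such that y = C y₀ + (I − C) y₁. -/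
/-!
Put `z = y - y₁` and `z₀ = y₀ - y₁`. The ball is the one with diameter `[0, z₀]` shifted by `y₁`,
so by Thales `‖z‖² ≤ ⟪z, z₀⟫`. The rank-one matrix `C = z zᵀ / ⟪z, z₀⟫` then maps `z₀` to `z`,
and its only nonzero eigenvalue `‖z‖² / ⟪z, z₀⟫` lies in `[0, 1]` (if `z = 0`, take `C = 0`);
finally `C y₀ + (1 - C) y₁ = y₁ + C z₀ = y`.
-/

open Matrix

theorem norm_sq_le_inner_of_norm_sub_half_smul_le {E : Type*} [NormedAddCommGroup E]
    [InnerProductSpace ℝ E] {z w : E} (h : ‖z - (2:ℝ)⁻¹ • w‖ ≤ ‖w‖ / 2) :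
    ‖z‖ ^ 2 ≤ inner ℝ z w := by
  have hsq := pow_le_pow_left₀ (norm_nonneg _) h 2
  rw [norm_sub_sq_real, inner_smul_right, norm_smul, norm_inv, Real.norm_ofNat] at hsq
  nlinarith

namespace Matrix

variable {ι : Type*} [Fintype ι]

theorem sq_dotProduct_le (u x : ι → ℝ) : (u ⬝ᵥ x) ^ 2 ≤ (u ⬝ᵥ u) * (x ⬝ᵥ x) := by
  simpa only [dotProduct, sq] using Finset.sum_mul_sq_le_sq_mul_sq Finset.univ u x

theorem vecMulVec_self_mulVec (u x : ι → ℝ) : vecMulVec u u *ᵥ x = (u ⬝ᵥ x) • u := by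
  rw [vecMulVec_mulVec, op_smul_eq_smul]

theorem posSemidef_vecMulVec_self (u : ι → ℝ) : (vecMulVec u u).PosSemidef := by
  simpa only [star_trivial] using posSemidef_vecMulVec_self_star u

theorem posSemidef_one_sub_smul_vecMulVec_self [DecidableEq ι] {c : ℝ} {u : ι → ℝ}
    (hc : c * (u ⬝ᵥ u) ≤ 1) : (1 - c • vecMulVec u u).PosSemidef := by
  refine posSemidef_iff_dotProduct_mulVec.mpr
    ⟨isHermitian_one.sub ((posSemidef_vecMulVec_self u).isHermitian.smul (.all c)), fun x => ?_⟩
  rw [star_trivial, sub_mulVec, one_mulVec, smul_mulVec, vecMulVec_self_mulVec, dotProduct_sub,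
    dotProduct_smul, dotProduct_smul, dotProduct_comm x u, smul_eq_mul, smul_eq_mul]
  have hcs := sq_dotProduct_le u x
  have hxx : 0 ≤ x ⬝ᵥ x := by simpa only [star_trivial] using dotProduct_star_self_nonneg x
  rcases le_total c 0 with hc0 | hc0
  · nlinarith [sq_nonneg (u ⬝ᵥ x)]
  · nlinarith [mul_le_mul_of_nonneg_left hcs hc0]

theorem exists_posSemidef_mulVec_eq_of_dotProduct_self_le [DecidableEq ι] {u w : ι → ℝ}
    (h : u ⬝ᵥ u ≤ u ⬝ᵥ w) :
    ∃ C : Matrix ι ι ℝ, C.PosSemidef ∧ (1 - C).PosSemidef ∧ C *ᵥ w = u := by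
  have huu : 0 ≤ u ⬝ᵥ u := by simpa only [star_trivial] using dotProduct_star_self_nonneg u
  rcases (huu.trans h).eq_or_lt with h0 | hpos
  · have hu : u = 0 := dotProduct_self_eq_zero.mp (le_antisymm (h0 ▸ h) huu)
    exact ⟨0, .zero, by simpa only [sub_zero] using PosSemidef.one, by rw [zero_mulVec, hu]⟩
  · refine ⟨(u ⬝ᵥ w)⁻¹ • vecMulVec u u,
      (posSemidef_vecMulVec_self u).smul (inv_nonneg.mpr hpos.le),
      posSemidef_one_sub_smul_vecMulVec_self ((inv_mul_le_one₀ hpos).mpr h), ?_⟩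
    rw [smul_mulVec, vecMulVec_self_mulVec, smul_smul, inv_mul_cancel₀ hpos.ne', one_smul]

end Matrix

/-- Every point of the ball centered at `(y₀+y₁)/2` with radius `‖y₁-y₀‖/2` is of
the form `C y₀ + (I - C) y₁` for some symmetric PSD `C` with spectral radius ≤ 1. -/
theorem stmt_9 {n : ℕ} (y₀ y₁ y : EuclideanSpace ℝ (Fin n))
    (hy : ‖y - (2:ℝ)⁻¹ • (y₀ + y₁)‖ ≤ ‖y₁ - y₀‖ / 2) :
    ∃ C : Matrix (Fin n) (Fin n) ℝ, C.PosSemidef ∧ (1 - C).PosSemidef ∧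
      (WithLp.equiv 2 (Fin n → ℝ)) y =
        C.mulVec ((WithLp.equiv 2 (Fin n → ℝ)) y₀) +
          (1 - C).mulVec ((WithLp.equiv 2 (Fin n → ℝ)) y₁) := by
  have hball : ‖(y - y₁) - (2:ℝ)⁻¹ • (y₀ - y₁)‖ ≤ ‖y₀ - y₁‖ / 2 := by
    rwa [norm_sub_rev y₀, show (y - y₁) - (2:ℝ)⁻¹ • (y₀ - y₁) = y - (2:ℝ)⁻¹ • (y₀ + y₁) by module]
  have hkey := norm_sq_le_inner_of_norm_sub_half_smul_le hball
  rw [← real_inner_self_eq_norm_sq, EuclideanSpace.inner_eq_star_dotProduct,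
    EuclideanSpace.inner_eq_star_dotProduct, star_trivial, dotProduct_comm (y₀ - y₁).ofLp] at hkey
  obtain ⟨C, hC, hC', hCw⟩ := exists_posSemidef_mulVec_eq_of_dotProduct_self_le hkey
  refine ⟨C, hC, hC', ?_⟩
  simp only [WithLp.ofLp_sub] at hCw
  rw [sub_mulVec, one_mulVec, WithLp.equiv_apply, WithLp.equiv_apply, WithLp.equiv_apply,
    ← sub_add_cancel y.ofLp y₁.ofLp, ← hCw, mulVec_sub]
  abel
end

section
/- (Main theorem, scalar scale.) Under the same setup (logconcave probability measure μ on ℝⁿ satisfying the Prékopa inequality, convex measurable quantization region Q⁻¹(z), S ∈ ℝ^{n×m}), the function (x, ψ) ↦ μ({w : (Sx + w)/ψ ∈ Q⁻¹(z)}) is jointly logconcave on ℝᵐ × (0, ∞). -/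
/-!
The noise region for location `x` and scale `ψ` is the translate `ψ • C - S x` of the dilated
cell `C = Q⁻¹(z)`. For convex `C` the dilations add up, `α • ψ₁ • C + (1 - α) • ψ₀ • C =
(α ψ₁ + (1 - α) ψ₀) • C`, so the Minkowski combination of the noise regions at `(x₁, ψ₁)` and
`(x₀, ψ₀)` lies inside the noise region at the interpolated parameters. Monotonicity of `μ`
and the Prékopa inequality for the two convex noise regions give joint logconcavity.
-/

open Pointwise MeasureTheory

section

variable {E : Type*} [AddCommGroup E] [Module ℝ E]

lemma setOf_inv_smul_add_mem_eq_preimage {ψ : ℝ} (hψ : ψ ≠ 0) (C : Set E) (v : E) :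
    {w | ψ⁻¹ • (v + w) ∈ C} = (v + ·) ⁻¹' (ψ • C) := by
  ext w
  exact (Set.mem_smul_set_iff_inv_smul_mem₀ hψ C _).symm

lemma Convex.smul_smul_add_smul_smul {C : Set E} (hC : Convex ℝ C) {a b ψ₀ ψ₁ : ℝ}
    (ha : 0 ≤ a) (hb : 0 ≤ b) (hψ₀ : 0 ≤ ψ₀) (hψ₁ : 0 ≤ ψ₁) :
    a • ψ₁ • C + b • ψ₀ • C = (a * ψ₁ + b * ψ₀) • C := by
  rw [smul_smul, smul_smul, hC.add_smul (by positivity) (by positivity)]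

lemma smul_preimage_add_add_smul_preimage_add_subset (a b : ℝ) (v₀ v₁ : E)
    (T₀ T₁ : Set E) :
    a • (v₁ + ·) ⁻¹' T₁ + b • (v₀ + ·) ⁻¹' T₀ ⊆
      (a • v₁ + b • v₀ + ·) ⁻¹' (a • T₁ + b • T₀) := by
  rintro _ ⟨_, ⟨u₁, hu₁, rfl⟩, _, ⟨u₀, hu₀, rfl⟩, rfl⟩
  refine ⟨a • (v₁ + u₁), Set.smul_mem_smul_set hu₁, b • (v₀ + u₀), Set.smul_mem_smul_set hu₀, ?_⟩
  simp only [smul_add]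
  abel

end

theorem stmt_13_general {n m : ℕ} {Z : Type*}
    (μ : Measure (Fin n → ℝ))
    (hPrekopa : ∀ A₀ A₁ : Set (Fin n → ℝ), Convex ℝ A₀ → Convex ℝ A₁ →
      ∀ α : ℝ, α ∈ Set.Icc (0:ℝ) 1 →
        μ (α • A₁ + (1 - α) • A₀) ≥ μ A₁ ^ α * μ A₀ ^ (1 - α))
    (Q : (Fin n → ℝ) → Z) (z : Z)
    (hQconv : Convex ℝ (Q ⁻¹' {z}))
    (S : Matrix (Fin n) (Fin m) ℝ) :
    ∀ x₀ x₁ : Fin m → ℝ, ∀ ψ₀ ψ₁ : ℝ, 0 < ψ₀ → 0 < ψ₁ →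
      ∀ α : ℝ, α ∈ Set.Icc (0:ℝ) 1 →
      μ {w | (α * ψ₁ + (1 - α) * ψ₀)⁻¹ •
            (S.mulVec (α • x₁ + (1 - α) • x₀) + w) ∈ Q ⁻¹' {z}} ≥
        μ {w | ψ₁⁻¹ • (S.mulVec x₁ + w) ∈ Q ⁻¹' {z}} ^ α *
          μ {w | ψ₀⁻¹ • (S.mulVec x₀ + w) ∈ Q ⁻¹' {z}} ^ (1 - α) := by
  intro x₀ x₁ ψ₀ ψ₁ hψ₀ hψ₁ α hα
  have hβ : 0 ≤ 1 - α := sub_nonneg.2 hα.2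
  have hψ : 0 < α * ψ₁ + (1 - α) * ψ₀ := convex_Ioi (0 : ℝ) hψ₁ hψ₀ hα.1 hβ (by ring)
  set C := Q ⁻¹' {z}
  rw [setOf_inv_smul_add_mem_eq_preimage hψ.ne', setOf_inv_smul_add_mem_eq_preimage hψ₀.ne',
    setOf_inv_smul_add_mem_eq_preimage hψ₁.ne']
  have hmix : α • (S.mulVec x₁ + ·) ⁻¹' (ψ₁ • C) + (1 - α) • (S.mulVec x₀ + ·) ⁻¹' (ψ₀ • C) ⊆
      (S.mulVec (α • x₁ + (1 - α) • x₀) + ·) ⁻¹' ((α * ψ₁ + (1 - α) * ψ₀) • C) := by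
    rw [← hQconv.smul_smul_add_smul_smul hα.1 hβ hψ₀.le hψ₁.le, Matrix.mulVec_add,
      Matrix.mulVec_smul, Matrix.mulVec_smul]
    exact smul_preimage_add_add_smul_preimage_add_subset _ _ _ _ _ _
  exact le_trans (hPrekopa _ _ ((hQconv.smul ψ₀).translate_preimage_right _)
    ((hQconv.smul ψ₁).translate_preimage_right _) α hα) (measure_mono hmix)

/-- Main theorem, scalar scale: the quantized-data likelihood is jointly
logconcave in the location `x` and the scalar scale `ψ > 0`. -/
theorem stmt_13 {n m : ℕ} {Z : Type*} [Countable Z]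
    (f : (Fin n → ℝ) → ENNReal)
    (hf : ∀ w₀ w₁ : Fin n → ℝ, ∀ α : ℝ, α ∈ Set.Icc (0:ℝ) 1 →
      f (α • w₁ + (1 - α) • w₀) ≥ f w₁ ^ α * f w₀ ^ (1 - α))
    (μ : Measure (Fin n → ℝ)) [IsProbabilityMeasure μ]
    (hμ : μ = MeasureTheory.volume.withDensity f)
    (hPrekopa : ∀ A₀ A₁ : Set (Fin n → ℝ), Convex ℝ A₀ → Convex ℝ A₁ →
      ∀ α : ℝ, α ∈ Set.Icc (0:ℝ) 1 →
        μ (α • A₁ + (1 - α) • A₀) ≥ μ A₁ ^ α * μ A₀ ^ (1 - α))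
    (Q : (Fin n → ℝ) → Z) (z : Z)
    (hQconv : Convex ℝ (Q ⁻¹' {z})) (hQmeas : MeasurableSet (Q ⁻¹' {z}))
    (S : Matrix (Fin n) (Fin m) ℝ) :
    ∀ x₀ x₁ : Fin m → ℝ, ∀ ψ₀ ψ₁ : ℝ, 0 < ψ₀ → 0 < ψ₁ →
      ∀ α : ℝ, α ∈ Set.Icc (0:ℝ) 1 →
      μ {w | (α * ψ₁ + (1 - α) * ψ₀)⁻¹ •
            (S.mulVec (α • x₁ + (1 - α) • x₀) + w) ∈ Q ⁻¹' {z}} ≥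
        μ {w | ψ₁⁻¹ • (S.mulVec x₁ + w) ∈ Q ⁻¹' {z}} ^ α *
          μ {w | ψ₀⁻¹ • (S.mulVec x₀ + w) ∈ Q ⁻¹' {z}} ^ (1 - α) :=
  stmt_13_general μ hPrekopa Q z hQconv S
end

section
/- (Main theorem, diagonal scale with box quantizer.) Let μ be a logconcave probability measure on ℝⁿ satisfying the Prékopa inequality, let Q⁻¹(z) = ∏_{j=1}^n [a_j, b_j] be a box, and S ∈ ℝ^{n×m}. Then (x, Λ) ↦ μ({Λy − Sx : y ∈ Q⁻¹(z)}) is jointly logconcave in x ∈ ℝᵐ and in the diagonal positive-definite matrix Λ (identified with its vector of diagonal entries in (0,∞)ⁿ). -/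
/-!
The likelihood set is `Λ • B - S x`. For a box `B = ∏ⱼ Iⱼ` with convex factors, the identity
`(p + q) • I = p • I + q • I` (valid for convex `I` and `p, q ≥ 0`) applied coordinatewise shows
that the convex combination `α • A₁ + (1 - α) • A₀` of the sets at `(x₁, Λ₁)` and `(x₀, Λ₀)` lies
inside the set at the combined parameters. Monotonicity of `μ` and the Prékopa inequality for the
convex sets `A₀, A₁` then give logconcavity.
-/

open Pointwise MeasureTheory Set
open scoped Matrix

section DiagonalScaling

variable {ι : Type*}

def diagAffineImage (d t : ι → ℝ) (B : Set (ι → ℝ)) : Set (ι → ℝ) :=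
  {w | ∃ y ∈ B, w = (fun j => d j * y j) - t}

theorem Convex.diagAffineImage {B : Set (ι → ℝ)} (hB : Convex ℝ B) (d t : ι → ℝ) :
    Convex ℝ (diagAffineImage d t B) := by
  rintro _ ⟨y₁, hy₁, rfl⟩ _ ⟨y₀, hy₀, rfl⟩ p q hp hq hpq
  refine ⟨p • y₁ + q • y₀, hB hy₁ hy₀ hp hq hpq, funext fun j => ?_⟩
  simp only [Pi.add_apply, Pi.smul_apply, Pi.sub_apply, smul_eq_mul]
  linear_combination (-t j) * hpq

theorem smul_diagAffineImage_add_smul_subset {I : ι → Set ℝ} (hI : ∀ j, Convex ℝ (I j))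
    {d₀ d₁ : ι → ℝ} (hd₀ : ∀ j, 0 ≤ d₀ j) (hd₁ : ∀ j, 0 ≤ d₁ j) {α β : ℝ}
    (hα : 0 ≤ α) (hβ : 0 ≤ β) (t₀ t₁ : ι → ℝ) :
    α • diagAffineImage d₁ t₁ (univ.pi I) + β • diagAffineImage d₀ t₀ (univ.pi I) ⊆
      diagAffineImage (α • d₁ + β • d₀) (α • t₁ + β • t₀) (univ.pi I) := by
  rintro _ ⟨_, ⟨_, ⟨y₁, hy₁, rfl⟩, rfl⟩, _, ⟨_, ⟨y₀, hy₀, rfl⟩, rfl⟩, rfl⟩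
  have hmem : ∀ j, (α * d₁ j) * y₁ j + (β * d₀ j) * y₀ j ∈ (α * d₁ j + β * d₀ j) • I j := by
    intro j
    rw [(hI j).add_smul (mul_nonneg hα (hd₁ j)) (mul_nonneg hβ (hd₀ j))]
    exact add_mem_add (smul_mem_smul_set (hy₁ j trivial)) (smul_mem_smul_set (hy₀ j trivial))
  choose y hy hy_eq using fun j => mem_smul_set.1 (hmem j)
  refine ⟨y, fun j _ => hy j, funext fun j => ?_⟩
  simp only [Pi.add_apply, Pi.smul_apply, Pi.sub_apply, smul_eq_mul] at hy_eq ⊢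
  rw [hy_eq]
  ring

end DiagonalScaling

theorem EReal.convex_coe_preimage_Icc (a b : EReal) :
    Convex ℝ (((↑) : ℝ → EReal) ⁻¹' Icc a b) :=
  (ordConnected_Icc.preimage_mono EReal.coe_strictMono.monotone).convex

theorem stmt_14_general {n m : ℕ}
    (μ : Measure (Fin n → ℝ))
    (hPrekopa : ∀ A₀ A₁ : Set (Fin n → ℝ), Convex ℝ A₀ → Convex ℝ A₁ →
      ∀ α : ℝ, α ∈ Set.Icc (0:ℝ) 1 →
        μ (α • A₁ + (1 - α) • A₀) ≥ μ A₁ ^ α * μ A₀ ^ (1 - α))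
    (a b : Fin n → EReal)
    (B : Set (Fin n → ℝ))
    (hB : B = {y : Fin n → ℝ | ∀ j, a j ≤ (y j : EReal) ∧ (y j : EReal) ≤ b j})
    (S : Matrix (Fin n) (Fin m) ℝ) :
    ∀ x₀ x₁ : Fin m → ℝ, ∀ d₀ d₁ : Fin n → ℝ,
      (∀ j, 0 < d₀ j) → (∀ j, 0 < d₁ j) →
      ∀ α : ℝ, α ∈ Set.Icc (0:ℝ) 1 →
      μ {w | ∃ y ∈ B, w = (fun j => (α • d₁ + (1 - α) • d₀) j * y j) -
            S.mulVec (α • x₁ + (1 - α) • x₀)} ≥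
        μ {w | ∃ y ∈ B, w = (fun j => d₁ j * y j) - S.mulVec x₁} ^ α *
          μ {w | ∃ y ∈ B, w = (fun j => d₀ j * y j) - S.mulVec x₀} ^ (1 - α) := by
  intro x₀ x₁ d₀ d₁ hd₀ hd₁ α hα
  have hB_pi : B = univ.pi fun j => ((↑) : ℝ → EReal) ⁻¹' Icc (a j) (b j) := by
    subst hB; ext y; simp
  have hB_convex : Convex ℝ B :=
    hB_pi ▸ convex_pi fun j _ => EReal.convex_coe_preimage_Icc (a j) (b j)
  have hsub : α • diagAffineImage d₁ (S *ᵥ x₁) B + (1 - α) • diagAffineImage d₀ (S *ᵥ x₀) B ⊆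
      diagAffineImage (α • d₁ + (1 - α) • d₀) (S *ᵥ (α • x₁ + (1 - α) • x₀)) B := by
    rw [Matrix.mulVec_add, Matrix.mulVec_smul, Matrix.mulVec_smul, hB_pi]
    exact smul_diagAffineImage_add_smul_subset (fun j => EReal.convex_coe_preimage_Icc _ _)
      (fun j => (hd₀ j).le) (fun j => (hd₁ j).le) hα.1 (sub_nonneg.2 hα.2) _ _
  calc μ (diagAffineImage (α • d₁ + (1 - α) • d₀) (S *ᵥ (α • x₁ + (1 - α) • x₀)) B)
      ≥ μ (α • diagAffineImage d₁ (S *ᵥ x₁) B + (1 - α) • diagAffineImage d₀ (S *ᵥ x₀) B) :=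
        measure_mono hsub
    _ ≥ _ := hPrekopa _ _ (hB_convex.diagAffineImage _ _) (hB_convex.diagAffineImage _ _) α hα

/-- Main theorem, diagonal scale with box quantizer: the likelihood is jointly
logconcave in the location `x` and the diagonal entries `d ∈ (0,∞)ⁿ` of `Λ`. -/
theorem stmt_14 {n m : ℕ}
    (f : (Fin n → ℝ) → ENNReal)
    (hf : ∀ w₀ w₁ : Fin n → ℝ, ∀ α : ℝ, α ∈ Set.Icc (0:ℝ) 1 →
      f (α • w₁ + (1 - α) • w₀) ≥ f w₁ ^ α * f w₀ ^ (1 - α))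
    (μ : Measure (Fin n → ℝ)) [IsProbabilityMeasure μ]
    (hμ : μ = MeasureTheory.volume.withDensity f)
    (hPrekopa : ∀ A₀ A₁ : Set (Fin n → ℝ), Convex ℝ A₀ → Convex ℝ A₁ →
      ∀ α : ℝ, α ∈ Set.Icc (0:ℝ) 1 →
        μ (α • A₁ + (1 - α) • A₀) ≥ μ A₁ ^ α * μ A₀ ^ (1 - α))
    (a b : Fin n → EReal) (hab : ∀ j, a j ≤ b j)
    (B : Set (Fin n → ℝ))
    (hB : B = {y : Fin n → ℝ | ∀ j, a j ≤ (y j : EReal) ∧ (y j : EReal) ≤ b j})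
    (S : Matrix (Fin n) (Fin m) ℝ) :
    ∀ x₀ x₁ : Fin m → ℝ, ∀ d₀ d₁ : Fin n → ℝ,
      (∀ j, 0 < d₀ j) → (∀ j, 0 < d₁ j) →
      ∀ α : ℝ, α ∈ Set.Icc (0:ℝ) 1 →
      μ {w | ∃ y ∈ B, w = (fun j => (α • d₁ + (1 - α) • d₀) j * y j) -
            S.mulVec (α • x₁ + (1 - α) • x₀)} ≥
        μ {w | ∃ y ∈ B, w = (fun j => d₁ j * y j) - S.mulVec x₁} ^ α *
          μ {w | ∃ y ∈ B, w = (fun j => d₀ j * y j) - S.mulVec x₀} ^ (1 - α) :=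
  stmt_14_general μ hPrekopa a b B hB S
end
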